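/- arXiv:2510.14864 — 6 statements merged into one kernel-verified Lean document; each statement's English description precedes it below -/
import Mathlib

section
/- Synergistic phenomenon (instance of Observation 1): for the XOR system, the sum over i of the mutual information between X_i and the joint of the remaining two variables strictly exceeds the joint entropy of the system: I(X1 ; (X2, X3)) + I(X2 ; (X1, X3)) + I(X3 ; (X1, X2)) = 3·Real.log 2 > 2·Real.log 2 = H((X1, X2, X3)). -/
/-! Each of the three pairs of bits, and the triple, is an injective image of the pair
`(X 0, X 1)`, which is uniform on `ZMod 2 × ZMod 2` by independence; so all of them have entropy
`2 log 2`. Each single bit has entropy `log 2`, `X 2` included, because adding an independent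
uniform bit yields a uniform bit. Every mutual information is then `log 2 + 2 log 2 - 2 log 2`. -/

open MeasureTheory ProbabilityTheory

/-- Shannon entropy (natural logarithm) of a finite-range random variable `X`,
computed from the probabilities of its values. -/
noncomputable def entropy {Ω : Type*} [MeasurableSpace Ω] {α : Type*}
    (μ : Measure Ω) (X : Ω → α) : ℝ :=
  ∑' a : α, Real.negMulLog (μ (X ⁻¹' {a})).toReal

/-- Conditional entropy `H(X | Y)`. -/
noncomputable def condEntropy {Ω : Type*} [MeasurableSpace Ω] {α β : Type*}
    (μ : Measure Ω) (X : Ω → α) (Y : Ω → β) : ℝ :=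
  entropy μ (fun ω => (X ω, Y ω)) - entropy μ Y

/-- Mutual information `I(X ; Y)`. -/
noncomputable def mutualInfo {Ω : Type*} [MeasurableSpace Ω] {α β : Type*}
    (μ : Measure Ω) (X : Ω → α) (Y : Ω → β) : ℝ :=
  entropy μ X + entropy μ Y - entropy μ (fun ω => (X ω, Y ω))

open scoped ENNReal

section

variable {Ω α : Type*} [MeasurableSpace Ω] {μ : Measure Ω}

def HasUniformLaw [Fintype α] (μ : Measure Ω) (X : Ω → α) : Prop :=
  ∀ a, μ (X ⁻¹' {a}) = (Fintype.card α : ℝ≥0∞)⁻¹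

theorem entropy_eq_sum [Fintype α] (μ : Measure Ω) (X : Ω → α) :
    entropy μ X = ∑ a, Real.negMulLog (μ (X ⁻¹' {a})).toReal :=
  tsum_fintype _

theorem HasUniformLaw.entropy_eq [Fintype α] {X : Ω → α} (hX : HasUniformLaw μ X) :
    entropy μ X = Real.log (Fintype.card α) := by
  simp only [entropy_eq_sum, show ∀ a, μ (X ⁻¹' {a}) = _ from hX, ENNReal.toReal_inv,
    ENNReal.toReal_natCast, Finset.sum_const, Finset.card_univ, nsmul_eq_mul, Real.negMulLog,
    Real.log_inv]
  rcases eq_or_ne (Fintype.card α : ℝ) 0 with h | h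
  · simp [h]
  · field_simp

theorem entropy_comp_of_injective {β : Type*} (X : Ω → α) {f : α → β}
    (hf : Function.Injective f) : entropy μ (fun ω => f (X ω)) = entropy μ X := by
  have hfiber (a : α) : (fun ω => f (X ω)) ⁻¹' {f a} = X ⁻¹' {a} := by
    ext ω; simp [hf.eq_iff]
  unfold entropy
  simp only [← hfiber]
  refine (hf.tsum_eq (f := fun b => Real.negMulLog (μ ((fun ω => f (X ω)) ⁻¹' {b})).toReal)
    fun b hb => ?_).symm
  by_contra hbf
  have : (fun ω => f (X ω)) ⁻¹' {b} = ∅ := by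
    ext ω; simpa using fun h => hbf ⟨X ω, h⟩
  simp [this] at hb

theorem ProbabilityTheory.IndepFun.hasUniformLaw_prod {β : Type*} [Fintype α] [Fintype β]
    [MeasurableSpace α] [MeasurableSpace β] [MeasurableSingletonClass α]
    [MeasurableSingletonClass β] {X : Ω → α} {Y : Ω → β} (hXY : IndepFun X Y μ)
    (hX : HasUniformLaw μ X) (hY : HasUniformLaw μ Y) :
    HasUniformLaw μ (fun ω => (X ω, Y ω)) := by
  rintro ⟨a, b⟩
  rw [← Set.singleton_prod_singleton, Set.mk_preimage_prod,
    hXY.measure_inter_preimage_eq_mul _ _ (measurableSet_singleton a) (measurableSet_singleton b),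
    hX, hY, Fintype.card_prod, Nat.cast_mul,
    ENNReal.mul_inv (Or.inr (ENNReal.natCast_ne_top _)) (Or.inl (ENNReal.natCast_ne_top _))]

theorem ProbabilityTheory.IndepFun.hasUniformLaw_add [IsProbabilityMeasure μ] {G : Type*}
    [AddGroup G] [Fintype G] [MeasurableSpace G] [MeasurableSingletonClass G] {X Y : Ω → G}
    (hX : Measurable X) (hXY : IndepFun X Y μ) (hY : HasUniformLaw μ Y) :
    HasUniformLaw μ (fun ω => X ω + Y ω) := by
  intro c
  have hfiber (a : G) :
      X ⁻¹' {a} ∩ (fun ω => X ω + Y ω) ⁻¹' {c} = X ⁻¹' {a} ∩ Y ⁻¹' {-a + c} := by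
    ext ω
    simp only [Set.mem_inter_iff, Set.mem_preimage, Set.mem_singleton_iff]
    exact and_congr_right fun h => by rw [h, eq_neg_add_iff_add_eq]
  calc μ ((fun ω => X ω + Y ω) ⁻¹' {c})
      = ∑ a, (μ.restrict ((fun ω => X ω + Y ω) ⁻¹' {c})) (X ⁻¹' {a}) := by
        rw [sum_measure_preimage_singleton _ fun a _ => hX (measurableSet_singleton a)]
        simp
    _ = ∑ a, μ (X ⁻¹' {a}) * (Fintype.card G : ℝ≥0∞)⁻¹ := by
        refine Finset.sum_congr rfl fun a _ => ?_
        rw [Measure.restrict_apply (hX (measurableSet_singleton a)), hfiber,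
          hXY.measure_inter_preimage_eq_mul _ _ (measurableSet_singleton a)
            (measurableSet_singleton _), hY]
    _ = (Fintype.card G : ℝ≥0∞)⁻¹ := by
        rw [← Finset.sum_mul,
          sum_measure_preimage_singleton _ fun a _ => hX (measurableSet_singleton a)]
        simp

theorem ProbabilityTheory.IndepFun.entropy_pair_of_hasUniformLaw {β : Type*} [Fintype α]
    [Fintype β] [Nonempty α] [Nonempty β] [MeasurableSpace α] [MeasurableSpace β]
    [MeasurableSingletonClass α] [MeasurableSingletonClass β] {X : Ω → α} {Y : Ω → β}
    (hXY : IndepFun X Y μ) (hX : HasUniformLaw μ X) (hY : HasUniformLaw μ Y) :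
    entropy μ (fun ω => (X ω, Y ω)) = Real.log (Fintype.card α) + Real.log (Fintype.card β) := by
  rw [(hXY.hasUniformLaw_prod hX hY).entropy_eq, Fintype.card_prod, Nat.cast_mul,
    Real.log_mul (Nat.cast_ne_zero.2 Fintype.card_ne_zero) (Nat.cast_ne_zero.2 Fintype.card_ne_zero)]

end

/-- **Synergistic phenomenon (Observation 1, XOR instance).** For the XOR system,
the sum over `i` of the mutual information between `X i` and the joint of the
remaining two variables strictly exceeds the joint entropy of the system:
`I(X1;(X2,X3)) + I(X2;(X1,X3)) + I(X3;(X1,X2)) = 3 log 2 > 2 log 2 = H((X1,X2,X3))`. -/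
theorem xor_synergistic_phenomenon
    {Ω : Type*} [MeasurableSpace Ω] (μ : Measure Ω) [IsProbabilityMeasure μ]
    (X : Fin 3 → Ω → ZMod 2) (hmeas : ∀ i, Measurable (X i))
    (hindep : IndepFun (X 0) (X 1) μ)
    (hunif0 : ∀ a : ZMod 2, μ (X 0 ⁻¹' {a}) = 1/2)
    (hunif1 : ∀ a : ZMod 2, μ (X 1 ⁻¹' {a}) = 1/2)
    (hX2 : X 2 = fun ω => X 0 ω + X 1 ω) :
    mutualInfo μ (X 0) (fun ω => (X 1 ω, X 2 ω))
      + mutualInfo μ (X 1) (fun ω => (X 0 ω, X 2 ω))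
      + mutualInfo μ (X 2) (fun ω => (X 0 ω, X 1 ω)) = 3 * Real.log 2
    ∧ 3 * Real.log 2 > 2 * Real.log 2
    ∧ 2 * Real.log 2 = entropy μ (fun ω => (X 0 ω, X 1 ω, X 2 ω)) := by
  have hbit : ∀ {Y : Ω → ZMod 2}, (∀ a, μ (Y ⁻¹' {a}) = 1/2) → HasUniformLaw μ Y :=
    fun hY a => by rw [hY, ZMod.card, one_div, Nat.cast_ofNat]
  have hlog : Real.log (Fintype.card (ZMod 2)) = Real.log 2 := by rw [ZMod.card, Nat.cast_ofNat]
  have h0 : entropy μ (X 0) = Real.log 2 := by rw [(hbit hunif0).entropy_eq, hlog]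
  have h1 : entropy μ (X 1) = Real.log 2 := by rw [(hbit hunif1).entropy_eq, hlog]
  have h2 : entropy μ (X 2) = Real.log 2 := by
    rw [hX2, (hindep.hasUniformLaw_add (hmeas 0) (hbit hunif1)).entropy_eq, hlog]
  have hpair : ∀ {β : Type} (f : ZMod 2 × ZMod 2 → β), Function.Injective f →
      entropy μ (fun ω => f (X 0 ω, X 1 ω)) = 2 * Real.log 2 := fun f hf => by
    rw [entropy_comp_of_injective _ hf,
      hindep.entropy_pair_of_hasUniformLaw (hbit hunif0) (hbit hunif1), hlog, two_mul]
  have e12 : entropy μ (fun ω => (X 1 ω, X 2 ω)) = 2 * Real.log 2 := by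
    rw [hX2]; exact hpair (fun p => (p.2, p.1 + p.2)) (by decide)
  have e02 : entropy μ (fun ω => (X 0 ω, X 2 ω)) = 2 * Real.log 2 := by
    rw [hX2]; exact hpair (fun p => (p.1, p.1 + p.2)) (by decide)
  have e01 : entropy μ (fun ω => (X 0 ω, X 1 ω)) = 2 * Real.log 2 :=
    hpair id Function.injective_id
  have e012 : entropy μ (fun ω => (X 0 ω, X 1 ω, X 2 ω)) = 2 * Real.log 2 := by
    rw [hX2]; exact hpair (fun p => (p.1, p.2, p.1 + p.2)) (by decide)
  have e102 : entropy μ (fun ω => (X 1 ω, X 0 ω, X 2 ω)) = 2 * Real.log 2 := by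
    rw [hX2]; exact hpair (fun p => (p.2, p.1, p.1 + p.2)) (by decide)
  have e201 : entropy μ (fun ω => (X 2 ω, X 0 ω, X 1 ω)) = 2 * Real.log 2 := by
    rw [hX2]; exact hpair (fun p => (p.1 + p.2, p.1, p.2)) (by decide)
  refine ⟨?_, by linarith [Real.log_pos one_lt_two], e012.symm⟩
  simp only [mutualInfo]
  rw [h0, h1, h2, e12, e02, e01, e012, e102, e201]
  ring
end

section
/- SID entropy decomposition identities (equations (8), (9), (10) of the paper): Let S1, S2, S3 be random variables with finite range, and let Ψ : A*({1,2,3}) → ℝ satisfy, for all distinct i, j, k ∈ {1,2,3}: (i) I((S_i, S_j) ; S_k) = Ψ({1}{2}{3}) + Ψ({i}{k}) + Ψ({j}{k}) + Ψ({ij}{k}); (ii) I(S_i ; S_k) = Ψ({1}{2}{3}) + Ψ({i}{k}); (iii) Ψ({k}) = H(S_k | (S_i, S_j)). Then for all distinct i, j, k: (1) H(S_k) = Ψ({1}{2}{3}) + Ψ({ij}{k}) + Ψ({j}{k}) + Ψ({i}{k}) + Ψ({k}); (2) H((S_i, S_k)) equals the sum of the eight atoms Ψ(β) over all β ∈ A*({1,2,3})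 other than {ik}{j} and {j}; (3) H((S1, S2, S3)) = Σ (the sum of all ten atoms Ψ(β), β ∈ A*({1,2,3})) minus Ψ({ij}{k}); consequently the three synergy-type atoms are equal: Ψ({12}{3}) = Ψ({13}{2}) = Ψ({23}{1}). -/
open MeasureTheory ProbabilityTheory

/-- `α` is an antichain on the finite index set `B`: a nonempty collection of
nonempty subsets of `B`, no member of which is a proper subset of another. -/
def IsAntichainOn (B : Finset ℕ) (α : Finset (Finset ℕ)) : Prop :=
  α.Nonempty ∧ (∀ A ∈ α, A.Nonempty ∧ A ⊆ B) ∧ ∀ A₁ ∈ α, ∀ A₂ ∈ α, ¬ A₁ ⊂ A₂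

instance (B : Finset ℕ) : DecidablePred (IsAntichainOn B) := fun α => by
  unfold IsAntichainOn; infer_instance

/-- The antichain lattice `A(B)` on the finite index set `B`. -/
def antichains (B : Finset ℕ) : Finset (Finset (Finset ℕ)) :=
  B.powerset.powerset.filter (IsAntichainOn B)

/-- The order on antichains: `precEq β α` means `β ⪯ α`, i.e. for every `A ∈ α`
there is `B ∈ β` with `B ⊆ A`. -/
def precEq (β α : Finset (Finset ℕ)) : Prop := ∀ A ∈ α, ∃ B ∈ β, B ⊆ A

instance : ∀ β α : Finset (Finset ℕ), Decidable (precEq β α) := fun β α => by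
  unfold precEq; infer_instance

/-- The index set `{1, 2, 3}`. -/
def N3 : Finset ℕ := {1, 2, 3}

/-- The 18-element antichain lattice `A({1,2,3})`. -/
def AC3 : Finset (Finset (Finset ℕ)) := antichains N3

/-- The SID half lattice `A*({1,2,3})`: the ten antichains on `{1,2,3}`
containing at least one singleton. -/
def ACstar : Finset (Finset (Finset ℕ)) :=
  AC3.filter (fun α => ∃ A ∈ α, A.card = 1)

/-!
Only two facts about entropy enter: it is invariant under any relabelling of values that
preserves the fibres, and the information measures are the usual linear combinations of joint
entropies. Then (i) and (iii) add up to `H(S_k) = I((S_i,S_j);S_k) + H(S_k | S_i,S_j)`, giving (1);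
`H(S_i,S_k) = H(S_i) + H(S_k) - I(S_i;S_k)` with (ii) and two instances of (1) gives (2); and
`H(S_1,S_2,S_3) = H(S_i,S_j) + H(S_k | S_i,S_j)` with (2) and (iii) gives (3). The left side of
(3) does not depend on the ordering `i, j, k`, so neither does `Ψ({ij}{k})`.
-/

section Entropy

variable {Ω α β : Type*} [MeasurableSpace Ω] (μ : Measure Ω)

theorem exists_eq_of_negMulLog_measure_preimage_ne_zero {X : Ω → α} {a : α}
    (h : Real.negMulLog (μ (X ⁻¹' {a})).toReal ≠ 0) : ∃ ω, X ω = a := by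
  by_contra! hX
  simp [Set.preimage_singleton_eq_empty.mpr (by simpa [Set.mem_range] using hX)] at h

theorem entropy_eq_of_eq_iff_eq {X : Ω → α} {Y : Ω → β}
    (h : ∀ ω ω', X ω = X ω' ↔ Y ω = Y ω') : entropy μ X = entropy μ Y := by
  have fiber_eq : ∀ ω, X ⁻¹' {X ω} = Y ⁻¹' {Y ω} := fun ω => by
    ext ω'; exact h ω' ω
  set gY := fun b => Real.negMulLog (μ (Y ⁻¹' {b})).toReal
  choose rep hrep using fun b : Function.support gY =>
    exists_eq_of_negMulLog_measure_preimage_ne_zero μ b.2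
  refine tsum_eq_tsum_of_ne_zero_bij (fun b => X (rep b)) ?_ ?_ ?_
  · intro b b' hbb'
    exact Subtype.ext ((hrep b).symm.trans (((h _ _).mp hbb').trans (hrep b')))
  · intro a ha
    obtain ⟨ω, rfl⟩ := exists_eq_of_negMulLog_measure_preimage_ne_zero μ ha
    have hω : Y ω ∈ Function.support gY := by
      simpa [gY, ← fiber_eq] using ha
    exact ⟨⟨Y ω, hω⟩, (h _ _).mpr (hrep ⟨Y ω, hω⟩)⟩
  · intro b
    simp only [gY, fiber_eq, hrep b]

theorem entropy_prod_comm (X : Ω → α) (Y : Ω → β) :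
    entropy μ (fun ω => (X ω, Y ω)) = entropy μ (fun ω => (Y ω, X ω)) :=
  entropy_eq_of_eq_iff_eq μ fun _ _ => by simp only [Prod.mk.injEq, and_comm]

theorem entropy_pair_eq_add_condEntropy (X : Ω → α) (Y : Ω → β) :
    entropy μ (fun ω => (X ω, Y ω)) = entropy μ Y + condEntropy μ X Y := by
  rw [condEntropy]
  ring

theorem mutualInfo_add_condEntropy (X : Ω → α) (Y : Ω → β) :
    mutualInfo μ X Y + condEntropy μ Y X = entropy μ Y := by
  rw [mutualInfo, condEntropy, entropy_prod_comm μ Y X]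
  ring

end Entropy

theorem N3_cases_of_distinct {i j k : ℕ} (hi : i ∈ N3) (hj : j ∈ N3) (hk : k ∈ N3)
    (hij : i ≠ j) (hik : i ≠ k) (hjk : j ≠ k) :
    (i = 1 ∧ j = 2 ∧ k = 3) ∨ (i = 1 ∧ j = 3 ∧ k = 2) ∨ (i = 2 ∧ j = 1 ∧ k = 3) ∨
    (i = 2 ∧ j = 3 ∧ k = 1) ∨ (i = 3 ∧ j = 1 ∧ k = 2) ∨ (i = 3 ∧ j = 2 ∧ k = 1) := by
  simp only [N3, Finset.mem_insert, Finset.mem_singleton] at hi hj hk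
  rcases hi with rfl | rfl | rfl <;> rcases hj with rfl | rfl | rfl <;>
    rcases hk with rfl | rfl | rfl <;> simp_all

def sidAtoms (i j k : ℕ) : List (Finset (Finset ℕ)) :=
  [{{1}, {2}, {3}}, {{i}, {j}}, {{i}, {k}}, {{j}, {k}},
    {{j, k}, {i}}, {{i, k}, {j}}, {{i, j}, {k}}, {{i}}, {{j}}, {{k}}]

theorem sidAtoms_nodup_and_toFinset_eq {i j k : ℕ} (hi : i ∈ N3) (hj : j ∈ N3) (hk : k ∈ N3)
    (hij : i ≠ j) (hik : i ≠ k) (hjk : j ≠ k) :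
    (sidAtoms i j k).Nodup ∧ (sidAtoms i j k).toFinset = ACstar := by
  rcases N3_cases_of_distinct hi hj hk hij hik hjk with
    ⟨rfl, rfl, rfl⟩ | ⟨rfl, rfl, rfl⟩ | ⟨rfl, rfl, rfl⟩ | ⟨rfl, rfl, rfl⟩ | ⟨rfl, rfl, rfl⟩ |
    ⟨rfl, rfl, rfl⟩ <;> decide

theorem sum_ACstar {i j k : ℕ} (Ψ : Finset (Finset ℕ) → ℝ) (hi : i ∈ N3) (hj : j ∈ N3)
    (hk : k ∈ N3) (hij : i ≠ j) (hik : i ≠ k) (hjk : j ≠ k) :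
    ∑ β ∈ ACstar, Ψ β = Ψ {{1}, {2}, {3}} + Ψ {{i}, {j}} + Ψ {{i}, {k}} + Ψ {{j}, {k}} +
      Ψ {{j, k}, {i}} + Ψ {{i, k}, {j}} + Ψ {{i, j}, {k}} + Ψ {{i}} + Ψ {{j}} + Ψ {{k}} := by
  obtain ⟨hnodup, hACstar⟩ := sidAtoms_nodup_and_toFinset_eq hi hj hk hij hik hjk
  rw [← hACstar, List.sum_toFinset Ψ hnodup]
  simp only [sidAtoms, List.map_cons, List.map_nil, List.sum_cons, List.sum_nil]
  ring

theorem sum_ACstar_sdiff {i j k : ℕ} (Ψ : Finset (Finset ℕ) → ℝ) (hi : i ∈ N3) (hj : j ∈ N3)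
    (hk : k ∈ N3) (hij : i ≠ j) (hik : i ≠ k) (hjk : j ≠ k) :
    ∑ β ∈ ACstar \ {({{i, k}, {j}} : Finset (Finset ℕ)), {{j}}}, Ψ β =
      ∑ β ∈ ACstar, Ψ β - Ψ {{i, k}, {j}} - Ψ {{j}} := by
  have hACstar := (sidAtoms_nodup_and_toFinset_eq hi hj hk hij hik hjk).2
  have hsub : {({{i, k}, {j}} : Finset (Finset ℕ)), {{j}}} ⊆ ACstar := by
    simp [← hACstar, Finset.insert_subset_iff, sidAtoms]
  have hne : ({{i, k}, {j}} : Finset (Finset ℕ)) ≠ {{j}} := by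
    intro h
    have hik_eq : ({i, k} : Finset ℕ) ∈ ({{j}} : Finset (Finset ℕ)) :=
      h ▸ Finset.mem_insert_self _ _
    rw [Finset.mem_singleton] at hik_eq
    exact hij (Finset.mem_singleton.mp (hik_eq ▸ Finset.mem_insert_self i {k}))
  rw [← Finset.sum_sdiff hsub, Finset.sum_pair hne]
  ring

theorem entropy_perm_triple {Ω α : Type*} [MeasurableSpace Ω] (μ : Measure Ω)
    (S : ℕ → Ω → α) {i j k : ℕ} (hi : i ∈ N3) (hj : j ∈ N3) (hk : k ∈ N3)
    (hij : i ≠ j) (hik : i ≠ k) (hjk : j ≠ k) :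
    entropy μ (fun ω => (S k ω, (S i ω, S j ω))) = entropy μ (fun ω => (S 1 ω, S 2 ω, S 3 ω)) := by
  refine entropy_eq_of_eq_iff_eq μ fun ω ω' => ?_
  rcases N3_cases_of_distinct hi hj hk hij hik hjk with
    ⟨rfl, rfl, rfl⟩ | ⟨rfl, rfl, rfl⟩ | ⟨rfl, rfl, rfl⟩ | ⟨rfl, rfl, rfl⟩ | ⟨rfl, rfl, rfl⟩ |
    ⟨rfl, rfl, rfl⟩ <;> simp only [Prod.mk.injEq] <;> tauto

theorem sid_entropy_decompositions_general
    {Ω α' : Type*} [MeasurableSpace Ω]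
    (μ : Measure Ω)
    (S : ℕ → Ω → α')
    (Ψ : Finset (Finset ℕ) → ℝ)
    -- (i) I((S_i, S_j); S_k) = Ψ({1}{2}{3}) + Ψ({i}{k}) + Ψ({j}{k}) + Ψ({ij}{k})
    (hI : ∀ i ∈ N3, ∀ j ∈ N3, ∀ k ∈ N3, i ≠ j → i ≠ k → j ≠ k →
      mutualInfo μ (fun ω => (S i ω, S j ω)) (S k) =
        Ψ {{1}, {2}, {3}} + Ψ {{i}, {k}} + Ψ {{j}, {k}} + Ψ {{i, j}, {k}})
    -- (ii) I(S_i; S_k) = Ψ({1}{2}{3}) + Ψ({i}{k})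
    (hII : ∀ i ∈ N3, ∀ k ∈ N3, i ≠ k →
      mutualInfo μ (S i) (S k) = Ψ {{1}, {2}, {3}} + Ψ {{i}, {k}})
    -- (iii) Ψ({k}) = H(S_k | (S_i, S_j))
    (hIII : ∀ i ∈ N3, ∀ j ∈ N3, ∀ k ∈ N3, i ≠ j → i ≠ k → j ≠ k →
      Ψ {{k}} = condEntropy μ (S k) (fun ω => (S i ω, S j ω))) :
    (∀ i ∈ N3, ∀ j ∈ N3, ∀ k ∈ N3, i ≠ j → i ≠ k → j ≠ k →
      -- (1) H(S_k) = Ψ({1}{2}{3}) + Ψ({ij}{k}) + Ψ({j}{k}) + Ψ({i}{k}) + Ψ({k})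
      (entropy μ (S k) =
        Ψ {{1}, {2}, {3}} + Ψ {{i, j}, {k}} + Ψ {{j}, {k}} + Ψ {{i}, {k}} + Ψ {{k}})
      -- (2) H((S_i, S_k)) = sum of the eight atoms other than {ik}{j} and {j}
      ∧ (entropy μ (fun ω => (S i ω, S k ω)) =
          ∑ β ∈ ACstar \ {({{i, k}, {j}} : Finset (Finset ℕ)), {{j}}}, Ψ β)
      -- (3) H((S1,S2,S3)) = Σ − Ψ({ij}{k})
      ∧ (entropy μ (fun ω => (S 1 ω, S 2 ω, S 3 ω)) =
          (∑ β ∈ ACstar, Ψ β) - Ψ {{i, j}, {k}}))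
    -- consequently the three synergy-type atoms are equal
    ∧ Ψ {{1, 2}, {3}} = Ψ {{1, 3}, {2}}
    ∧ Ψ {{1, 3}, {2}} = Ψ {{2, 3}, {1}} := by
  have single : ∀ i ∈ N3, ∀ j ∈ N3, ∀ k ∈ N3, i ≠ j → i ≠ k → j ≠ k → entropy μ (S k) =
      Ψ {{1}, {2}, {3}} + Ψ {{i, j}, {k}} + Ψ {{j}, {k}} + Ψ {{i}, {k}} + Ψ {{k}} := by
    intro i hi j hj k hk hij hik hjk
    rw [← mutualInfo_add_condEntropy, hI i hi j hj k hk hij hik hjk,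
      ← hIII i hi j hj k hk hij hik hjk]
    ring
  have pair : ∀ i ∈ N3, ∀ j ∈ N3, ∀ k ∈ N3, i ≠ j → i ≠ k → j ≠ k →
      entropy μ (fun ω => (S i ω, S k ω)) =
        ∑ β ∈ ACstar \ {({{i, k}, {j}} : Finset (Finset ℕ)), {{j}}}, Ψ β := by
    intro i hi j hj k hk hij hik hjk
    have hIIik := hII i hi k hk hik
    rw [mutualInfo, single j hj k hk i hi hjk hij.symm hik.symm,
      single i hi j hj k hk hij hik hjk, Finset.pair_comm ({j} : Finset ℕ) {i},
      Finset.pair_comm ({k} : Finset ℕ) {i}] at hIIik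
    rw [sum_ACstar_sdiff Ψ hi hj hk hij hik hjk, sum_ACstar Ψ hi hj hk hij hik hjk]
    linarith
  have triple : ∀ i ∈ N3, ∀ j ∈ N3, ∀ k ∈ N3, i ≠ j → i ≠ k → j ≠ k →
      entropy μ (fun ω => (S 1 ω, S 2 ω, S 3 ω)) = (∑ β ∈ ACstar, Ψ β) - Ψ {{i, j}, {k}} := by
    intro i hi j hj k hk hij hik hjk
    rw [← entropy_perm_triple μ S hi hj hk hij hik hjk, entropy_pair_eq_add_condEntropy,
      ← hIII i hi j hj k hk hij hik hjk, pair i hi k hk j hj hik hij hjk.symm,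
      sum_ACstar_sdiff Ψ hi hk hj hik hij hjk.symm]
    ring
  have h₁₂₃ := triple 1 (by decide) 2 (by decide) 3 (by decide) (by decide) (by decide) (by decide)
  have h₁₃₂ := triple 1 (by decide) 3 (by decide) 2 (by decide) (by decide) (by decide) (by decide)
  have h₂₃₁ := triple 2 (by decide) 3 (by decide) 1 (by decide) (by decide) (by decide) (by decide)
  exact ⟨fun i hi j hj k hk hij hik hjk => ⟨single i hi j hj k hk hij hik hjk,
    pair i hi j hj k hk hij hik hjk, triple i hi j hj k hk hij hik hjk⟩,
    by linarith, by linarith⟩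

/-- **SID entropy decomposition identities (equations (8), (9), (10)).**
From the SID constraints (i)–(iii) one obtains the decompositions of `H(S_k)`,
`H((S_i, S_k))` and `H((S1,S2,S3))`, the latter being the sum `Σ` of all ten
SI-atoms minus `Ψ({ij}{k})`; consequently the three synergy-type atoms agree. -/
theorem sid_entropy_decompositions
    {Ω α' : Type*} [MeasurableSpace Ω] [MeasurableSpace α']
    (μ : Measure Ω) [IsProbabilityMeasure μ]
    (S : ℕ → Ω → α') (hmeas : ∀ i ∈ N3, Measurable (S i))
    (hfin : ∀ i ∈ N3, (Set.range (S i)).Finite)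
    (Ψ : Finset (Finset ℕ) → ℝ)
    -- (i) I((S_i, S_j); S_k) = Ψ({1}{2}{3}) + Ψ({i}{k}) + Ψ({j}{k}) + Ψ({ij}{k})
    (hI : ∀ i ∈ N3, ∀ j ∈ N3, ∀ k ∈ N3, i ≠ j → i ≠ k → j ≠ k →
      mutualInfo μ (fun ω => (S i ω, S j ω)) (S k) =
        Ψ {{1}, {2}, {3}} + Ψ {{i}, {k}} + Ψ {{j}, {k}} + Ψ {{i, j}, {k}})
    -- (ii) I(S_i; S_k) = Ψ({1}{2}{3}) + Ψ({i}{k})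
    (hII : ∀ i ∈ N3, ∀ k ∈ N3, i ≠ k →
      mutualInfo μ (S i) (S k) = Ψ {{1}, {2}, {3}} + Ψ {{i}, {k}})
    -- (iii) Ψ({k}) = H(S_k | (S_i, S_j))
    (hIII : ∀ i ∈ N3, ∀ j ∈ N3, ∀ k ∈ N3, i ≠ j → i ≠ k → j ≠ k →
      Ψ {{k}} = condEntropy μ (S k) (fun ω => (S i ω, S j ω))) :
    (∀ i ∈ N3, ∀ j ∈ N3, ∀ k ∈ N3, i ≠ j → i ≠ k → j ≠ k →
      -- (1) H(S_k) = Ψ({1}{2}{3}) + Ψ({ij}{k}) + Ψ({j}{k}) + Ψ({i}{k}) + Ψ({k})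
      (entropy μ (S k) =
        Ψ {{1}, {2}, {3}} + Ψ {{i, j}, {k}} + Ψ {{j}, {k}} + Ψ {{i}, {k}} + Ψ {{k}})
      -- (2) H((S_i, S_k)) = sum of the eight atoms other than {ik}{j} and {j}
      ∧ (entropy μ (fun ω => (S i ω, S k ω)) =
          ∑ β ∈ ACstar \ {({{i, k}, {j}} : Finset (Finset ℕ)), {{j}}}, Ψ β)
      -- (3) H((S1,S2,S3)) = Σ − Ψ({ij}{k})
      ∧ (entropy μ (fun ω => (S 1 ω, S 2 ω, S 3 ω)) =
          (∑ β ∈ ACstar, Ψ β) - Ψ {{i, j}, {k}}))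
    -- consequently the three synergy-type atoms are equal
    ∧ Ψ {{1, 2}, {3}} = Ψ {{1, 3}, {2}}
    ∧ Ψ {{1, 3}, {2}} = Ψ {{2, 3}, {1}} :=
  sid_entropy_decompositions_general μ S Ψ hI hII hIII
end

section
/- Uniqueness of SI-atoms given the redundancy atom (Lemma 4): Let M be the 9×10 real matrix whose rows are [1,1,1,0,1,0,0,1,0,0], [1,1,0,1,0,1,0,0,1,0], [1,0,1,1,0,0,1,0,0,1], [1,1,1,1,1,1,0,1,1,0], [1,1,1,1,1,0,1,1,0,1], [1,1,1,1,0,1,1,0,1,1], [1,1,1,1,1,1,0,1,1,1], [1,1,1,1,1,0,1,1,1,1], [1,1,1,1,0,1,1,1,1,1]. If x, y ∈ ℝ^10 satisfy M x = M y and x and y agree in their first coordinate, then x = y. Equivalently, every v in the kernel of M whose first coordinate is 0 is the zero vector. -/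
/-- The 9×10 matrix `M` encoding the nine linear constraints of SID Axiom 1
relating the ten SI-atoms (ordered `Ψ({1}{2}{3})`, `Ψ({1}{2})`, `Ψ({1}{3})`,
`Ψ({2}{3})`, `Ψ({1}{23})`, `Ψ({2}{13})`, `Ψ({3}{12})`, `Ψ({1})`, `Ψ({2})`,
`Ψ({3})`) to the entropies. -/
def sidMatrix : Matrix (Fin 9) (Fin 10) ℝ :=
  !![1,1,1,0,1,0,0,1,0,0;
     1,1,0,1,0,1,0,0,1,0;
     1,0,1,1,0,0,1,0,0,1;
     1,1,1,1,1,1,0,1,1,0;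
     1,1,1,1,1,0,1,1,0,1;
     1,1,1,1,0,1,1,0,1,1;
     1,1,1,1,1,1,0,1,1,1;
     1,1,1,1,1,0,1,1,1,1;
     1,1,1,1,0,1,1,1,1,1]

/-! Each of the last three rows of `sidMatrix` exceeds one of rows 4–6 by a single unique atom
`Ψ({i})`, so those vanish on the kernel; the remaining rows then force the kernel to be the line
through `(1, -1, -1, -1, 1, 1, 1, 0, 0, 0)`, whose redundancy coordinate is nonzero. -/

open Matrix

def sidKernelVec : Fin 10 → ℝ := ![1, -1, -1, -1, 1, 1, 1, 0, 0, 0]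

theorem sidMatrix_mulVec (v : Fin 10 → ℝ) : sidMatrix *ᵥ v =
    ![v 0 + v 1 + v 2 + v 4 + v 7,
      v 0 + v 1 + v 3 + v 5 + v 8,
      v 0 + v 2 + v 3 + v 6 + v 9,
      v 0 + v 1 + v 2 + v 3 + v 4 + v 5 + v 7 + v 8,
      v 0 + v 1 + v 2 + v 3 + v 4 + v 6 + v 7 + v 9,
      v 0 + v 1 + v 2 + v 3 + v 5 + v 6 + v 8 + v 9,
      v 0 + v 1 + v 2 + v 3 + v 4 + v 5 + v 7 + v 8 + v 9,
      v 0 + v 1 + v 2 + v 3 + v 4 + v 6 + v 7 + v 8 + v 9,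
      v 0 + v 1 + v 2 + v 3 + v 5 + v 6 + v 7 + v 8 + v 9] := by
  ext i
  fin_cases i <;> simp [sidMatrix, mulVec, dotProduct, Fin.sum_univ_succ] <;> ring

theorem sidMatrix_mulVec_sidKernelVec : sidMatrix *ᵥ sidKernelVec = 0 := by
  ext i
  fin_cases i <;> simp [sidMatrix_mulVec, sidKernelVec]

theorem sidMatrix_mulVec_eq_zero_iff (v : Fin 10 → ℝ) :
    sidMatrix *ᵥ v = 0 ↔ v = v 0 • sidKernelVec := by
  refine ⟨fun hv => ?_, fun hv => by rw [hv, mulVec_smul, sidMatrix_mulVec_sidKernelVec, smul_zero]⟩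
  obtain ⟨h₁, h₂, h₃, h₄, h₅, h₆, h₇, h₈, h₉⟩ :
      v 0 + v 1 + v 2 + v 4 + v 7 = 0 ∧ v 0 + v 1 + v 3 + v 5 + v 8 = 0 ∧
      v 0 + v 2 + v 3 + v 6 + v 9 = 0 ∧
      v 0 + v 1 + v 2 + v 3 + v 4 + v 5 + v 7 + v 8 = 0 ∧
      v 0 + v 1 + v 2 + v 3 + v 4 + v 6 + v 7 + v 9 = 0 ∧
      v 0 + v 1 + v 2 + v 3 + v 5 + v 6 + v 8 + v 9 = 0 ∧
      v 0 + v 1 + v 2 + v 3 + v 4 + v 5 + v 7 + v 8 + v 9 = 0 ∧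
      v 0 + v 1 + v 2 + v 3 + v 4 + v 6 + v 7 + v 8 + v 9 = 0 ∧
      v 0 + v 1 + v 2 + v 3 + v 5 + v 6 + v 7 + v 8 + v 9 = 0 := by
    simpa [sidMatrix_mulVec, funext_iff, Fin.forall_fin_succ] using hv
  have hunique : v 7 = 0 ∧ v 8 = 0 ∧ v 9 = 0 := by refine ⟨?_, ?_, ?_⟩ <;> linarith
  have hsynergy : v 4 = v 0 ∧ v 5 = v 0 ∧ v 6 = v 0 := by refine ⟨?_, ?_, ?_⟩ <;> linarith
  have hpair : v 1 = -v 0 ∧ v 2 = -v 0 ∧ v 3 = -v 0 := by refine ⟨?_, ?_, ?_⟩ <;> linarith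
  ext i
  fin_cases i <;> simp [sidKernelVec] <;> linarith

/-- **Uniqueness of SI-atoms given the redundancy atom (Lemma 4).** If two
solutions of the SID constraint system agree in the redundancy atom (the first
coordinate), they coincide; equivalently, any kernel vector of `sidMatrix` with
vanishing first coordinate is zero. -/
theorem si_atoms_unique_given_redundancy :
    (∀ x y : Fin 10 → ℝ, sidMatrix.mulVec x = sidMatrix.mulVec y → x 0 = y 0 → x = y)
    ∧ (∀ v : Fin 10 → ℝ, sidMatrix.mulVec v = 0 → v 0 = 0 → v = 0) := by
  have hker (v : Fin 10 → ℝ) (hv : sidMatrix *ᵥ v = 0) (h0 : v 0 = 0) : v = 0 := by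
    rw [(sidMatrix_mulVec_eq_zero_iff v).1 hv, h0, zero_smul]
  refine ⟨fun x y hxy h0 => sub_eq_zero.1 (hker (x - y) ?_ ?_), hker⟩
  · rw [mulVec_sub, hxy, sub_self]
  · rw [Pi.sub_apply, h0, sub_self]
end

section
/- Explicit SI-atoms solve the SID constraint system (equation (14)): Let S1, S2, S3 be random variables with finite range and let r ∈ ℝ. Define x(r) ∈ ℝ^10 (coordinates ordered as (Ψ({1}{2}{3}), Ψ({1}{2}), Ψ({1}{3}), Ψ({2}{3}), Ψ({1}{23}), Ψ({2}{13}), Ψ({3}{12}), Ψ({1}), Ψ({2}), Ψ({3}))) by: Ψ({1}{2}{3}) = r; Ψ({i}{j}) = H(S_i) + H(S_j) − H((S_i,S_j)) − r for each pair {i,j}; Ψ({i}{jk}) = −H(S1) − H(S2) − H(S3) + H((S1,S2)) + H((S1,S3)) + H((S2,S3)) − H((S1,S2,S3)) + r for each i (with {j,k} the complement); Ψ({i}) = H((S1,S2,S3)) − H((S_j,S_k)) for each i. Then M x(r) = Y, where M is the 9×10 matrix with rows [1,1,1,0,1,0,0,1,0,0], [1,1,0,1,0,1,0,0,1,0], [1,0,1,1,0,0,1,0,0,1],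 [1,1,1,1,1,1,0,1,1,0], [1,1,1,1,1,0,1,1,0,1], [1,1,1,1,0,1,1,0,1,1], [1,1,1,1,1,1,0,1,1,1], [1,1,1,1,1,0,1,1,1,1], [1,1,1,1,0,1,1,1,1,1], and Y = (H(S1), H(S2), H(S3), H((S1,S2)), H((S1,S3)), H((S2,S3)), H((S1,S2,S3)), H((S1,S2,S3)), H((S1,S2,S3))). -/
open MeasureTheory ProbabilityTheory

theorem sidMatrix_mulVec_s6 (x : Fin 10 → ℝ) :
    sidMatrix.mulVec x =
      ![x 0 + x 1 + x 2 + x 4 + x 7,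
        x 0 + x 1 + x 3 + x 5 + x 8,
        x 0 + x 2 + x 3 + x 6 + x 9,
        x 0 + x 1 + x 2 + x 3 + x 4 + x 5 + x 7 + x 8,
        x 0 + x 1 + x 2 + x 3 + x 4 + x 6 + x 7 + x 9,
        x 0 + x 1 + x 2 + x 3 + x 5 + x 6 + x 8 + x 9,
        x 0 + x 1 + x 2 + x 3 + x 4 + x 5 + x 7 + x 8 + x 9,
        x 0 + x 1 + x 2 + x 3 + x 4 + x 6 + x 7 + x 8 + x 9,
        x 0 + x 1 + x 2 + x 3 + x 5 + x 6 + x 7 + x 8 + x 9] := by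
  ext i
  fin_cases i <;> simp [sidMatrix, Matrix.mulVec, dotProduct, Fin.sum_univ_succ, add_assoc]

theorem explicit_si_atoms_solve_sid_general
    (r : ℝ)
    (H1 H2 H3 H12 H13 H23 H123 : ℝ) :
    sidMatrix.mulVec
      ![r,
        H1 + H2 - H12 - r,
        H1 + H3 - H13 - r,
        H2 + H3 - H23 - r,
        -H1 - H2 - H3 + H12 + H13 + H23 - H123 + r,
        -H1 - H2 - H3 + H12 + H13 + H23 - H123 + r,
        -H1 - H2 - H3 + H12 + H13 + H23 - H123 + r,
        H123 - H23,
        H123 - H13,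
        H123 - H12]
      = ![H1, H2, H3, H12, H13, H23, H123, H123, H123] := by
  rw [sidMatrix_mulVec_s6]
  simp only [Matrix.cons_val]
  ring_nf

/-- **Explicit SI-atoms solve the SID constraint system (equation (14)).**
For any value `r` of the redundancy atom, the explicit vector `x(r)` of SI-atoms
built from the entropies of `S1, S2, S3` satisfies `M x(r) = Y`. -/
theorem explicit_si_atoms_solve_sid
    {Ω α : Type*} [MeasurableSpace Ω] [MeasurableSpace α]
    (μ : Measure Ω) [IsProbabilityMeasure μ]
    (S1 S2 S3 : Ω → α)
    (h1 : Measurable S1) (h2 : Measurable S2) (h3 : Measurable S3)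
    (hf1 : (Set.range S1).Finite) (hf2 : (Set.range S2).Finite)
    (hf3 : (Set.range S3).Finite)
    (r : ℝ)
    (H1 H2 H3 H12 H13 H23 H123 : ℝ)
    (hH1 : H1 = entropy μ S1) (hH2 : H2 = entropy μ S2) (hH3 : H3 = entropy μ S3)
    (hH12 : H12 = entropy μ (fun ω => (S1 ω, S2 ω)))
    (hH13 : H13 = entropy μ (fun ω => (S1 ω, S3 ω)))
    (hH23 : H23 = entropy μ (fun ω => (S2 ω, S3 ω)))
    (hH123 : H123 = entropy μ (fun ω => (S1 ω, S2 ω, S3 ω))) :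
    sidMatrix.mulVec
      ![r,
        H1 + H2 - H12 - r,
        H1 + H3 - H13 - r,
        H2 + H3 - H23 - r,
        -H1 - H2 - H3 + H12 + H13 + H23 - H123 + r,
        -H1 - H2 - H3 + H12 + H13 + H23 - H123 + r,
        -H1 - H2 - H3 + H12 + H13 + H23 - H123 + r,
        H123 - H23,
        H123 - H13,
        H123 - H12]
      = ![H1, H2, H3, H12, H13, H23, H123, H123, H123] :=
  explicit_si_atoms_solve_sid_general r H1 H2 H3 H12 H13 H23 H123
end

section
/- Identity of atoms across the two systems (Lemma 6(i)): Let π̂1, π̂2, π̂3 : A({1,2,3}) → ℝ satisfy the sub-target-t atom constraints for t = 1, 2, 3 respectively, and set π̂ = π̂1 + π̂2 + π̂3 (additivity over the three independent sub-targets of T̂). Let π̄ : A({1,2,3}) → ℝ satisfy the System-2 atom constraints. Then π̂(β) = π̄(β) for every β in the eleven-element set F = { {1}{2}{3}; {1}{2}, {1}{3}, {2}{3}; {1}{23}, {2}{13}, {3}{12}; {1}, {2}, {3}; {123} }; specifically, π̂({i}{jk}) = π̄({i}{jk}) = Real.log 2 for all distinct i, j, k, and both π̂ and π̄ vanish on all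 other elements of F. -/
/-- The System-2 atom constraints on `π : A({1,2,3}) → ℝ` (instances, for the
XOR system with target `T̄ = (X1,X2,X3)`, of PID nonnegativity, the
independent-identity property, self-redundancy, the two-source decompositions
of `I(X_i;T̄)`, cross-scale subsystem consistency and null atoms). -/
def System2Constraints (π : Finset (Finset ℕ) → ℝ) : Prop :=
  -- (a) nonnegativity
  (∀ β ∈ AC3, 0 ≤ π β)
  -- (b) π({1}{2}{3}) + π({i}{j}) = 0
  ∧ (∀ i ∈ N3, ∀ j ∈ N3, i ≠ j → π {{1}, {2}, {3}} + π {{i}, {j}} = 0)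
  -- (c) decomposition of I(X_i ; T̄) = log 2
  ∧ (∀ i ∈ N3, ∀ j ∈ N3, ∀ k ∈ N3, i ≠ j → i ≠ k → j ≠ k →
      π {{1}, {2}, {3}} + π {{i}, {j}} + π {{i}, {k}} + π {{i}, {j, k}} + π {{i}}
        = Real.log 2)
  -- (d) null atoms
  ∧ (∀ i ∈ N3, ∀ j ∈ N3, ∀ k ∈ N3, i ≠ j → i ≠ k → j ≠ k →
      π {{i}} = 0 ∧ π {{i, j}} = 0 ∧ π {{i, k}} = 0 ∧ π {{1, 2, 3}} = 0
        ∧ π {{i, j}, {i, k}} = 0)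

/-- `c_t(i) = log 2` if `i = t` and `c_t(i) = 0` otherwise: the mutual
information between the `t`-th sub-target of System 1 and the source `Ŝ_i`. -/
noncomputable def cSub (t i : ℕ) : ℝ := if i = t then Real.log 2 else 0

/-- The sub-target-`t` atom constraints on `π : A({1,2,3}) → ℝ`. -/
def SubTargetConstraints (t : ℕ) (π : Finset (Finset ℕ) → ℝ) : Prop :=
  -- (a) nonnegativity
  (∀ β ∈ AC3, 0 ≤ π β)
  -- (b) monotonicity and cross-scale consistency
  ∧ (∀ i ∈ N3, ∀ j ∈ N3, i ≠ j →
      π {{1}, {2}, {3}} + π {{i}, {j}} ≤ min (cSub t i) (cSub t j))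
  -- (c) decomposition of I over the three-source lattice
  ∧ (∀ i ∈ N3, ∀ j ∈ N3, ∀ k ∈ N3, i ≠ j → i ≠ k → j ≠ k →
      π {{1}, {2}, {3}} + π {{i}, {j}} + π {{i}, {k}} + π {{i}, {j, k}} + π {{i}}
        = cSub t i)
  -- (d) null atoms, where {j,k} = {1,2,3} \ {t}
  ∧ (∀ j ∈ N3, ∀ k ∈ N3, j ≠ k → j ≠ t → k ≠ t →
      π {{t}} = 0 ∧ π {{t, j}} = 0 ∧ π {{t, k}} = 0 ∧ π {{1, 2, 3}} = 0
        ∧ π {{t, j}, {t, k}} = 0)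

/-- The eleven-element set `F` of antichains on which the two systems' atoms
are compared. -/
def Fatoms : Finset (Finset (Finset ℕ)) :=
  {{{1}, {2}, {3}},
   {{1}, {2}}, {{1}, {3}}, {{2}, {3}},
   {{1}, {2, 3}}, {{2}, {1, 3}}, {{3}, {1, 2}},
   {{1}}, {{2}}, {{3}},
   {{1, 2, 3}}}

/-!
Every atom of `F` except the synergy atoms `{i}{jk}` is squeezed to zero: `π({1}{2}{3}) + π({i}{j})`
is bounded by `0` (for a sub-target, at most one of `c_t(i)`, `c_t(j)` is nonzero), the null-atom
constraints kill `{123}` and `{t}` (every `{i}`, for System 2), and nonnegativity forces the remaining summands of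
the decompositions to vanish. The decomposition of `I(Ŝ_i; ·)` then leaves
`π({i}{jk}) = c(i)`, which is `c_t(i)` for sub-target `t` and `log 2` for System 2, and
`c_1 + c_2 + c_3 = log 2` on `{1,2,3}`.
-/

lemma exists_pair_mem_N3_ne (t : ℕ) : ∃ j ∈ N3, ∃ k ∈ N3, j ≠ k ∧ j ≠ t ∧ k ≠ t := by
  rcases eq_or_ne t 1 with rfl | h1
  · exact ⟨2, by decide, 3, by decide, by decide, by decide, by decide⟩
  rcases eq_or_ne t 2 with rfl | h2
  · exact ⟨1, by decide, 3, by decide, by decide, by decide, by decide⟩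
  exact ⟨1, by decide, 2, by decide, by decide, h1.symm, h2.symm⟩

lemma pair_mem_AC3 : ∀ i ∈ N3, ∀ j ∈ N3, i ≠ j → ({{i}, {j}} : Finset (Finset ℕ)) ∈ AC3 := by
  decide

lemma singleton_pair_mem_AC3 : ∀ i ∈ N3, ∀ j ∈ N3, ∀ k ∈ N3, i ≠ j → i ≠ k → j ≠ k →
    ({{i}, {j, k}} : Finset (Finset ℕ)) ∈ AC3 := by
  decide

lemma singleton_mem_AC3 : ∀ i ∈ N3, ({{i}} : Finset (Finset ℕ)) ∈ AC3 := by
  decide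

lemma min_cSub_nonpos (t : ℕ) {i j : ℕ} (hij : i ≠ j) : min (cSub t i) (cSub t j) ≤ 0 := by
  rcases eq_or_ne i t with rfl | hi
  · exact (min_le_right _ _).trans_eq (if_neg hij.symm)
  · exact (min_le_left _ _).trans_eq (if_neg hi)

lemma cSub_one_add_cSub_two_add_cSub_three {i : ℕ} (hi : i ∈ N3) :
    cSub 1 i + cSub 2 i + cSub 3 i = Real.log 2 := by
  simp only [N3, Finset.mem_insert, Finset.mem_singleton] at hi
  rcases hi with rfl | rfl | rfl <;> simp [cSub]

structure HasSynergyProfile (π : Finset (Finset ℕ) → ℝ) (c : ℕ → ℝ) : Prop where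
  triple : π {{1}, {2}, {3}} = 0
  pair : ∀ i ∈ N3, ∀ j ∈ N3, i ≠ j → π {{i}, {j}} = 0
  singleton : ∀ i ∈ N3, π {{i}} = 0
  top : π {{1, 2, 3}} = 0
  synergy : ∀ i ∈ N3, ∀ j ∈ N3, ∀ k ∈ N3, i ≠ j → i ≠ k → j ≠ k → π {{i}, {j, k}} = c i

namespace HasSynergyProfile

variable {π π' : Finset (Finset ℕ) → ℝ} {c c' : ℕ → ℝ}

lemma add (h : HasSynergyProfile π c) (h' : HasSynergyProfile π' c') :
    HasSynergyProfile (π + π') (c + c') where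
  triple := by simp [h.triple, h'.triple]
  pair i hi j hj hij := by simp [h.pair i hi j hj hij, h'.pair i hi j hj hij]
  singleton i hi := by simp [h.singleton i hi, h'.singleton i hi]
  top := by simp [h.top, h'.top]
  synergy i hi j hj k hk hij hik hjk := by
    simp [h.synergy i hi j hj k hk hij hik hjk, h'.synergy i hi j hj k hk hij hik hjk]

lemma of_eqOn (h : HasSynergyProfile π c) (hc : Set.EqOn c c' N3) : HasSynergyProfile π c' :=
  { h with
    synergy := fun i hi j hj k hk hij hik hjk =>
      (h.synergy i hi j hj k hk hij hik hjk).trans (hc hi) }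

lemma eq_zero_of_mem_sdiff (h : HasSynergyProfile π c) {β : Finset (Finset ℕ)}
    (hβ : β ∈ Fatoms \
      ({{{1}, {2, 3}}, {{2}, {1, 3}}, {{3}, {1, 2}}} : Finset (Finset (Finset ℕ)))) :
    π β = 0 := by
  obtain ⟨hF, hsyn⟩ := Finset.mem_sdiff.mp hβ
  fin_cases hF
  all_goals first
    | exact absurd (by decide) hsyn
    | exact h.triple
    | exact h.top
    | exact h.pair _ (by decide) _ (by decide) (by decide)
    | exact h.singleton _ (by decide)

lemma eqOn_Fatoms {a : ℝ} (h : HasSynergyProfile π fun _ => a)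
    (h' : HasSynergyProfile π' fun _ => a) : Set.EqOn π π' Fatoms := by
  intro β hβ
  by_cases hsyn : β ∈ ({{{1}, {2, 3}}, {{2}, {1, 3}}, {{3}, {1, 2}}} : Finset (Finset (Finset ℕ)))
  · simp only [Finset.mem_insert, Finset.mem_singleton] at hsyn
    rcases hsyn with rfl | rfl | rfl <;>
      exact (h.synergy _ (by decide) _ (by decide) _ (by decide) (by decide) (by decide)
        (by decide)).trans
        (h'.synergy _ (by decide) _ (by decide) _ (by decide) (by decide) (by decide)
        (by decide)).symm
  · have hβ' := Finset.mem_sdiff.mpr ⟨hβ, hsyn⟩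
    rw [h.eq_zero_of_mem_sdiff hβ', h'.eq_zero_of_mem_sdiff hβ']

end HasSynergyProfile

variable {π : Finset (Finset ℕ) → ℝ}

theorem SubTargetConstraints.hasSynergyProfile {t : ℕ} (h : SubTargetConstraints t π) :
    HasSynergyProfile π (cSub t) := by
  obtain ⟨hnonneg, hpair, hdecomp, hnull⟩ := h
  have htriple : 0 ≤ π {{1}, {2}, {3}} := hnonneg _ (by decide)
  have pair : ∀ i ∈ N3, ∀ j ∈ N3, i ≠ j → π {{i}, {j}} = 0 := fun i hi j hj hij => by
    linarith [hpair i hi j hj hij, min_cSub_nonpos t hij, hnonneg _ (pair_mem_AC3 i hi j hj hij)]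
  have triple : π {{1}, {2}, {3}} = 0 := by
    linarith [hpair 1 (by decide) 2 (by decide) (by decide), min_cSub_nonpos t (i := 1) (j := 2)
      (by decide), pair 1 (by decide) 2 (by decide) (by decide)]
  have decomp : ∀ i ∈ N3, ∀ j ∈ N3, ∀ k ∈ N3, i ≠ j → i ≠ k → j ≠ k →
      π {{i}, {j, k}} + π {{i}} = cSub t i := fun i hi j hj k hk hij hik hjk => by
    linarith [hdecomp i hi j hj k hk hij hik hjk, pair i hi j hj hij, pair i hi k hk hik]
  obtain ⟨j, hj, k, hk, hjk, hjt, hkt⟩ := exists_pair_mem_N3_ne t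
  obtain ⟨hnull_t, -, -, top, -⟩ := hnull j hj k hk hjk hjt hkt
  have singleton : ∀ i ∈ N3, π {{i}} = 0 := by
    intro i hi
    rcases eq_or_ne i t with rfl | hit
    · exact hnull_t
    obtain ⟨j, hj, k, hk, hjk, hji, hki⟩ := exists_pair_mem_N3_ne i
    have hc : cSub t i = 0 := if_neg hit
    linarith [decomp i hi j hj k hk hji.symm hki.symm hjk, hnonneg _ (singleton_mem_AC3 i hi),
      hnonneg _ (singleton_pair_mem_AC3 i hi j hj k hk hji.symm hki.symm hjk)]
  exact ⟨triple, pair, singleton, top, fun i hi j hj k hk hij hik hjk => by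
    linarith [decomp i hi j hj k hk hij hik hjk, singleton i hi]⟩

theorem System2Constraints.hasSynergyProfile (h : System2Constraints π) :
    HasSynergyProfile π fun _ => Real.log 2 := by
  obtain ⟨hnonneg, hpair, hdecomp, hnull⟩ := h
  have htriple : 0 ≤ π {{1}, {2}, {3}} := hnonneg _ (by decide)
  have pair : ∀ i ∈ N3, ∀ j ∈ N3, i ≠ j → π {{i}, {j}} = 0 := fun i hi j hj hij => by
    linarith [hpair i hi j hj hij, hnonneg _ (pair_mem_AC3 i hi j hj hij)]
  have singleton : ∀ i ∈ N3, π {{i}} = 0 := fun i hi => by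
    obtain ⟨j, hj, k, hk, hjk, hji, hki⟩ := exists_pair_mem_N3_ne i
    exact (hnull i hi j hj k hk hji.symm hki.symm hjk).1
  refine ⟨?_, pair, singleton, ?_, fun i hi j hj k hk hij hik hjk => ?_⟩
  · linarith [hpair 1 (by decide) 2 (by decide) (by decide), pair 1 (by decide) 2 (by decide)
      (by decide)]
  · exact (hnull 1 (by decide) 2 (by decide) 3 (by decide) (by decide) (by decide)
      (by decide)).2.2.2.1
  · linarith [hdecomp i hi j hj k hk hij hik hjk, hpair 1 (by decide) 2 (by decide) (by decide),
      pair 1 (by decide) 2 (by decide) (by decide), pair i hi j hj hij, pair i hi k hk hik,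
      singleton i hi]

/-- **Identity of atoms across the two systems (Lemma 6(i)).** If `π̂t`
satisfies the sub-target-`t` atom constraints for `t = 1, 2, 3`,
`π̂ = π̂1 + π̂2 + π̂3`, and `π̄` satisfies the System-2 atom constraints, then
`π̂` and `π̄` agree on `F`; specifically both equal `log 2` on the three
synergy-type atoms `{i}{jk}` and both vanish on all other elements of `F`. -/
theorem atoms_identical_across_systems
    (π1 π2 π3 : Finset (Finset ℕ) → ℝ)
    (h1 : SubTargetConstraints 1 π1) (h2 : SubTargetConstraints 2 π2)
    (h3 : SubTargetConstraints 3 π3)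
    (πhat : Finset (Finset ℕ) → ℝ)
    (hhat : πhat = fun β => π1 β + π2 β + π3 β)
    (πbar : Finset (Finset ℕ) → ℝ) (hbar : System2Constraints πbar) :
    (∀ β ∈ Fatoms, πhat β = πbar β)
    ∧ (∀ i ∈ N3, ∀ j ∈ N3, ∀ k ∈ N3, i ≠ j → i ≠ k → j ≠ k →
        πhat {{i}, {j, k}} = Real.log 2 ∧ πbar {{i}, {j, k}} = Real.log 2)
    ∧ (∀ β ∈ Fatoms \
          ({{{1}, {2, 3}}, {{2}, {1, 3}}, {{3}, {1, 2}}} :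
            Finset (Finset (Finset ℕ))),
        πhat β = 0 ∧ πbar β = 0) := by
  subst hhat
  have hhat : HasSynergyProfile (π1 + π2 + π3) fun _ => Real.log 2 :=
    ((h1.hasSynergyProfile.add h2.hasSynergyProfile).add h3.hasSynergyProfile).of_eqOn
      fun _ hi => cSub_one_add_cSub_two_add_cSub_three hi
  have hbar := hbar.hasSynergyProfile
  exact ⟨hhat.eqOn_Fatoms hbar,
    fun i hi j hj k hk hij hik hjk =>
      ⟨hhat.synergy i hi j hj k hk hij hik hjk, hbar.synergy i hi j hj k hk hij hik hjk⟩,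
    fun _ hβ => ⟨hhat.eq_zero_of_mem_sdiff hβ, hbar.eq_zero_of_mem_sdiff hβ⟩⟩
end

section
/- Subsystem inconsistency in lattice-based PID (Theorem 1, concrete form): There is no subset O ⊆ A({1,2,3}) of the three-source antichain lattice such that both of the following hold: (i) for every π̂ of the form π̂1 + π̂2 + π̂3, where π̂t satisfies the sub-target-t atom constraints for t = 1, 2, 3, one has Σ_{β ∈ O} π̂(β) = 3·Real.log 2 (which equals I((Ŝ1,Ŝ2,Ŝ3) ; T̂) for System 1); and (ii) for every π̄ satisfying the System-2 atom constraints one has Σ_{β ∈ O} π̄(β) = 2·Real.log 2 (which equals I((X1,X2,X3) ; T̄) for System 2). Equivalently, for every subset O ⊆ A({1,2,3}) there exists either a π̂ as in (i) with Σ_{β ∈ O} π̂(β) ≠ 3·Real.log 2, or a π̄ as in (ii) with Σ_{β ∈ O} π̄(β) ≠ 2·Real.log 2. -/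
/-! Putting `log 2` on the atom `{t}{jk}` alone is admissible for every sub-target `t`, and the sum
of these three assignments is admissible for System 2. Conditions (i) and (ii) would then assign
the same sum over `O` both the value `3 log 2` and the value `2 log 2`. -/

lemma mem_N3 {i : ℕ} : i ∈ N3 ↔ i = 1 ∨ i = 2 ∨ i = 3 := by
  simp only [N3, Finset.mem_insert, Finset.mem_singleton]

noncomputable def singleAtomPID (t : ℕ) : Finset (Finset ℕ) → ℝ :=
  Pi.single {{t}, N3.erase t} (Real.log 2)

lemma singleAtomPID_nonneg (t : ℕ) : 0 ≤ singleAtomPID t :=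
  Pi.single_nonneg.2 (Real.log_nonneg one_le_two)

lemma subTargetConstraints_singleAtomPID {t : ℕ} (ht : t ∈ N3) :
    SubTargetConstraints t (singleAtomPID t) := by
  obtain rfl | rfl | rfl := mem_N3.1 ht <;>
    refine ⟨fun β _ => singleAtomPID_nonneg _ β, ?_⟩ <;>
    simp +decide [N3, singleAtomPID, Pi.single_apply, cSub,
      Real.log_nonneg one_le_two]

lemma system2Constraints_sum_singleAtomPID :
    System2Constraints fun β => singleAtomPID 1 β + singleAtomPID 2 β + singleAtomPID 3 β := by
  refine ⟨fun β _ => add_nonneg (add_nonneg (singleAtomPID_nonneg 1 β)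
    (singleAtomPID_nonneg 2 β)) (singleAtomPID_nonneg 3 β), ?_⟩
  simp +decide [N3, singleAtomPID, Pi.single_apply]

/-- **Subsystem inconsistency in lattice-based PID (Theorem 1, concrete
form).** There is no subset `O ⊆ A({1,2,3})` such that simultaneously (i) every
`π̂ = π̂1 + π̂2 + π̂3` with `π̂t` satisfying the sub-target-`t` atom constraints
sums over `O` to `3 log 2` (which equals `I((Ŝ1,Ŝ2,Ŝ3); T̂)` for System 1), and
(ii) every `π̄` satisfying the System-2 atom constraints sums over `O` to
`2 log 2` (which equals `I((X1,X2,X3); T̄)` for System 2). -/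
theorem subsystem_inconsistency_lattice_pid :
    ∀ O : Finset (Finset (Finset ℕ)), O ⊆ AC3 →
      ¬ ((∀ π1 π2 π3 : Finset (Finset ℕ) → ℝ,
            SubTargetConstraints 1 π1 → SubTargetConstraints 2 π2 →
            SubTargetConstraints 3 π3 →
            ∑ β ∈ O, (π1 β + π2 β + π3 β) = 3 * Real.log 2)
        ∧ (∀ π : Finset (Finset ℕ) → ℝ, System2Constraints π →
            ∑ β ∈ O, π β = 2 * Real.log 2)) := by
  intro O _ ⟨hSystem1, hSystem2⟩
  have hsum_three := hSystem1 _ _ _ (subTargetConstraints_singleAtomPID (by decide))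
    (subTargetConstraints_singleAtomPID (by decide)) (subTargetConstraints_singleAtomPID (by decide))
  have hsum_two := hSystem2 _ system2Constraints_sum_singleAtomPID
  linarith [Real.log_pos one_lt_two]
end
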